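/- Let γ : [0,ξ] → ℂ^{m2×m} be differentiable with γ'(x) j γ(x)* = 0 and γ(x) j γ(x)* = -I_{m2} on [0,ξ], where j = diag(I_{m1},-I_{m2}) and γ = [γ₁ γ₂] with γ₂(x) invertible for all x. Then γ₂' = γ₂ · (γ₂⁻¹γ₁)' (γ₂⁻¹γ₁)* (I_{m2} − (γ₂⁻¹γ₁)(γ₂⁻¹γ₁)*)⁻¹ on [0,ξ]. -/

import Mathlib

open Matrix

/-- The signature matrix `j = diag(I_{m1}, -I_{m2})`. -/
noncomputable def sigJ (m1 m2 : ℕ) : Matrix (Fin m1 ⊕ Fin m2) (Fin m1 ⊕ Fin m2) ℂ :=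
  Matrix.fromBlocks 1 0 0 (-1)

/-!
Write `γ = [γ₁ γ₂]` and `E = γ₂⁻¹γ₁`. In blocks, `γ j γ* = -I` reads `γ₂γ₂* - γ₁γ₁* = I`, so
`I - EE* = γ₂⁻¹(γ₂*)⁻¹` and `(I - EE*)⁻¹ = γ₂*γ₂`; and `γ' j γ* = 0` reads `γ₁'γ₁* = γ₂'γ₂*`.
Differentiating `γ₁ = γ₂E` gives `γ₂E' = γ₁' - γ₂'E`, hence
`γ₂E'E*γ₂*γ₂ = (γ₁' - γ₂'E)γ₁*γ₂ = γ₂'γ₂⁻¹(γ₂γ₂* - γ₁γ₁*)γ₂ = γ₂'`.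
-/

open Filter Topology

lemma eq_fromCols_of_apply {R m n₁ n₂ : Type*} {M : Matrix m (n₁ ⊕ n₂) R}
    {M₁ : Matrix m n₁ R} {M₂ : Matrix m n₂ R}
    (h₁ : ∀ i k, M₁ i k = M i (Sum.inl k)) (h₂ : ∀ i k, M₂ i k = M i (Sum.inr k)) :
    M = fromCols M₁ M₂ := by
  ext i (k | k)
  · exact (h₁ i k).symm
  · exact (h₂ i k).symm

lemma fromCols_mul_sigJ_mul_conjTranspose {m1 m2 : ℕ} (M N : Matrix (Fin m2) (Fin m1) ℂ)
    (P Q : Matrix (Fin m2) (Fin m2) ℂ) :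
    fromCols M P * sigJ m1 m2 * (fromCols N Q)ᴴ = M * Nᴴ - P * Qᴴ := by
  rw [sigJ, fromCols_mul_fromBlocks, conjTranspose_fromCols_eq_fromRows_conjTranspose,
    fromCols_mul_fromRows]
  simp [sub_eq_add_neg]

lemma eventually_mul_nonsing_inv_mul_eq {K X m n : Type*} [Field K] [TopologicalSpace K]
    [IsTopologicalRing K] [T1Space K] [TopologicalSpace X] [Fintype n] [DecidableEq n]
    {A : X → Matrix n n K} {x : X} (hA : ContinuousAt A x) (hAx : IsUnit (A x))
    (B : X → Matrix n m K) :
    ∀ᶠ t in 𝓝 x, A t * ((A t)⁻¹ * B t) = B t := by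
  have hdet : ContinuousAt (fun t => (A t).det) x :=
    continuous_id.matrix_det.continuousAt.comp hA
  filter_upwards [hdet.eventually_ne ((isUnit_iff_isUnit_det _).mp hAx).ne_zero] with t ht
  exact mul_nonsing_inv_cancel_left _ _ (isUnit_iff_ne_zero.mpr ht)

lemma hasDerivAt_matrix_mul_apply {𝕜 𝔸 m n p : Type*} [NontriviallyNormedField 𝕜]
    [NormedRing 𝔸] [NormedAlgebra 𝕜 𝔸] [Fintype n]
    {M : 𝕜 → Matrix m n 𝔸} {M' : Matrix m n 𝔸} {N : 𝕜 → Matrix n p 𝔸} {N' : Matrix n p 𝔸}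
    {x : 𝕜} (hM : ∀ i j, HasDerivAt (fun t => M t i j) (M' i j) x)
    (hN : ∀ j k, HasDerivAt (fun t => N t j k) (N' j k) x) (i : m) (k : p) :
    HasDerivAt (fun t => (M t * N t) i k) ((M' * N x + M x * N') i k) x := by
  simp only [Matrix.mul_apply, Matrix.add_apply, ← Finset.sum_add_distrib]
  exact HasDerivAt.fun_sum fun j _ => (hM i j).mul (hN j k)

lemma eq_add_of_hasDerivAt_nonsing_inv_mul {𝕜 𝔸 m n : Type*} [NontriviallyNormedField 𝕜]
    [NormedField 𝔸] [NormedAlgebra 𝕜 𝔸] [Fintype n] [DecidableEq n]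
    {A : 𝕜 → Matrix n n 𝔸} {A' : Matrix n n 𝔸} {B : 𝕜 → Matrix n m 𝔸} {B' D : Matrix n m 𝔸}
    {x : 𝕜} (hA : ∀ i j, HasDerivAt (fun t => A t i j) (A' i j) x)
    (hB : ∀ i k, HasDerivAt (fun t => B t i k) (B' i k) x)
    (hD : ∀ i k, HasDerivAt (fun t => ((A t)⁻¹ * B t) i k) (D i k) x) (hAx : IsUnit (A x)) :
    B' = A' * ((A x)⁻¹ * B x) + A x * D := by
  have hAc : ContinuousAt A x :=
    continuousAt_pi.2 fun i => continuousAt_pi.2 fun j => (hA i j).continuousAt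
  ext i k
  refine (hB i k).unique ((hasDerivAt_matrix_mul_apply hA hD i k).congr_of_eventuallyEq ?_)
  filter_upwards [eventually_mul_nonsing_inv_mul_eq hAc hAx B] with t ht
  rw [ht]

section Algebra

variable {R m n : Type*} [CommRing R] [StarRing R] [Fintype n] [DecidableEq n]
  {A A' : Matrix n n R} {B B' : Matrix n m R}

lemma conjTranspose_nonsing_inv_mul_mul_conjTranspose (hA : IsUnit A) :
    (A⁻¹ * B)ᴴ * Aᴴ = Bᴴ := by
  rw [← conjTranspose_mul, mul_nonsing_inv_cancel_left _ _ ((isUnit_iff_isUnit_det A).mp hA)]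

variable [Fintype m]

lemma inv_one_sub_mul_conjTranspose_of_sub_eq_one (hA : IsUnit A)
    (hJ : A * Aᴴ - B * Bᴴ = 1) :
    (1 - (A⁻¹ * B) * (A⁻¹ * B)ᴴ)⁻¹ = Aᴴ * A := by
  have hdet : IsUnit A.det := (isUnit_iff_isUnit_det A).mp hA
  refine inv_eq_right_inv ?_
  calc (1 - (A⁻¹ * B) * (A⁻¹ * B)ᴴ) * (Aᴴ * A)
      = A⁻¹ * ((A * Aᴴ - B * Bᴴ) * A) := by
        simp only [sub_mul, mul_sub, Matrix.one_mul, Matrix.mul_assoc,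
          nonsing_inv_mul_cancel_left _ _ hdet]
        rw [← Matrix.mul_assoc (A⁻¹ * B)ᴴ, conjTranspose_nonsing_inv_mul_mul_conjTranspose hA]
    _ = 1 := by rw [hJ, Matrix.one_mul, nonsing_inv_mul _ hdet]

lemma eq_mul_mul_conjTranspose_mul_inv_one_sub (hA : IsUnit A) (hJ : A * Aᴴ - B * Bᴴ = 1)
    (hJ' : B' * Bᴴ = A' * Aᴴ) {D : Matrix n m R} (hB' : B' = A' * (A⁻¹ * B) + A * D) :
    A' = A * D * (A⁻¹ * B)ᴴ * (1 - (A⁻¹ * B) * (A⁻¹ * B)ᴴ)⁻¹ := by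
  have hdet : IsUnit A.det := (isUnit_iff_isUnit_det A).mp hA
  rw [inv_one_sub_mul_conjTranspose_of_sub_eq_one hA hJ, eq_sub_of_add_eq' hB'.symm]
  calc A' = A' * A⁻¹ * ((A * Aᴴ - B * Bᴴ) * A) := by
        rw [hJ, Matrix.one_mul, Matrix.mul_assoc, nonsing_inv_mul _ hdet, Matrix.mul_one]
    _ = (B' * Bᴴ - A' * (A⁻¹ * B) * Bᴴ) * A := by
        simp only [sub_mul, mul_sub, Matrix.mul_assoc, nonsing_inv_mul_cancel_left _ _ hdet, hJ']
    _ = (B' - A' * (A⁻¹ * B)) * (A⁻¹ * B)ᴴ * (Aᴴ * A) := by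
        rw [Matrix.mul_assoc _ (A⁻¹ * B)ᴴ, ← Matrix.mul_assoc (A⁻¹ * B)ᴴ,
          conjTranspose_nonsing_inv_mul_mul_conjTranspose hA]
        simp only [Matrix.sub_mul, Matrix.mul_assoc]

end Algebra

/-- if `γ' j γ* = 0`, `γ j γ* = -I` and `γ₂` is invertible, then
`γ₂' = γ₂ (γ₂⁻¹γ₁)' (γ₂⁻¹γ₁)* (I − (γ₂⁻¹γ₁)(γ₂⁻¹γ₁)*)⁻¹` on `[0,ξ]`. -/
theorem gamma2_ode (m1 m2 : ℕ) (ξ : ℝ)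
    (γ γ' : ℝ → Matrix (Fin m2) (Fin m1 ⊕ Fin m2) ℂ)
    (γ₁ γ₁' : ℝ → Matrix (Fin m2) (Fin m1) ℂ)
    (γ₂ γ₂' : ℝ → Matrix (Fin m2) (Fin m2) ℂ)
    (hγ₁ : ∀ x i k, γ₁ x i k = γ x i (Sum.inl k))
    (hγ₂ : ∀ x i k, γ₂ x i k = γ x i (Sum.inr k))
    (hγ₁' : ∀ x i k, γ₁' x i k = γ' x i (Sum.inl k))
    (hγ₂' : ∀ x i k, γ₂' x i k = γ' x i (Sum.inr k))
    (hγd : ∀ x ∈ Set.Icc (0:ℝ) ξ, ∀ i k, HasDerivAt (fun t => γ t i k) (γ' x i k) x)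
    (h0 : ∀ x ∈ Set.Icc (0:ℝ) ξ, γ' x * sigJ m1 m2 * (γ x).conjTranspose = 0)
    (hneg : ∀ x ∈ Set.Icc (0:ℝ) ξ, γ x * sigJ m1 m2 * (γ x).conjTranspose = -1)
    (hinv : ∀ x ∈ Set.Icc (0:ℝ) ξ, IsUnit (γ₂ x))
    (D : ℝ → Matrix (Fin m2) (Fin m1) ℂ)
    (hD : ∀ x ∈ Set.Icc (0:ℝ) ξ, ∀ i k,
      HasDerivAt (fun t => ((γ₂ t)⁻¹ * γ₁ t) i k) (D x i k) x) :
    ∀ x ∈ Set.Icc (0:ℝ) ξ,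
      γ₂' x = γ₂ x * D x * ((γ₂ x)⁻¹ * γ₁ x).conjTranspose *
        ((1 : Matrix (Fin m2) (Fin m2) ℂ)
          - ((γ₂ x)⁻¹ * γ₁ x) * ((γ₂ x)⁻¹ * γ₁ x).conjTranspose)⁻¹ := by
  intro x hx
  have hγ : γ x = fromCols (γ₁ x) (γ₂ x) := eq_fromCols_of_apply (hγ₁ x) (hγ₂ x)
  have hγ'' : γ' x = fromCols (γ₁' x) (γ₂' x) := eq_fromCols_of_apply (hγ₁' x) (hγ₂' x)
  have hJ : γ₂ x * (γ₂ x)ᴴ - γ₁ x * (γ₁ x)ᴴ = 1 := by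
    rw [← neg_sub, ← fromCols_mul_sigJ_mul_conjTranspose, ← hγ, hneg x hx, neg_neg]
  have hJ' : γ₁' x * (γ₁ x)ᴴ = γ₂' x * (γ₂ x)ᴴ := by
    rw [← sub_eq_zero, ← fromCols_mul_sigJ_mul_conjTranspose, ← hγ, ← hγ'', h0 x hx]
  have hγ₁d : ∀ i k, HasDerivAt (fun t => γ₁ t i k) (γ₁' x i k) x := fun i k => by
    simpa only [← hγ₁, ← hγ₁'] using hγd x hx i (Sum.inl k)
  have hγ₂d : ∀ i k, HasDerivAt (fun t => γ₂ t i k) (γ₂' x i k) x := fun i k => by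
    simpa only [← hγ₂, ← hγ₂'] using hγd x hx i (Sum.inr k)
  exact eq_mul_mul_conjTranspose_mul_inv_one_sub (hinv x hx) hJ hJ'
    (eq_add_of_hasDerivAt_nonsing_inv_mul hγ₂d hγ₁d (hD x hx) (hinv x hx))
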